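/- Let Δ be a set of transition formulas over states Q whose quantifier rank is bounded: let K be the maximum number k of existential quantifiers appearing in any formula in Δ. If two finite sequences S₁,…,S_n and S'₁,…,S'_{n'} of subsets of Q realize the same (K+1)-bounded counting configuration, then for every transition formula θ ∈ Δ, the structure struct(S₁,…,S_n) satisfies θ if and only if struct(S'₁,…,S'_{n'}) satisfies θ. -/

import Mathlib

/-- A transition formula over a state set `Q`, i.e. the data of the first-order sentence
`∃x₁⋯∃x_k (diff(x₁,…,x_k) ∧ q₁(x₁) ∧ ⋯ ∧ q_k(x_k) ∧ ∀z (diff(z,x₁,…,x_k) → ψ))`,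
where `ψ` is a disjunction of conjunctions of atoms `q(z)` (given as a list of lists). -/
structure TransFormula (Q : Type) where
  k : ℕ
  req : Fin k → Q
  dnf : List (List Q)

/-- Satisfaction of a transition formula in the structure `struct(S₁,…,S_n)` determined by a
list of subsets of `Q`: the universe is the index set, and each unary predicate `q` holds at
index `i` iff `q ∈ Sᵢ`. -/
def TransFormula.satL {Q : Type} (θ : TransFormula Q) (L : List (Set Q)) : Prop :=
  ∃ x : Fin θ.k → Fin L.length, Function.Injective x ∧
    (∀ i : Fin θ.k, θ.req i ∈ L.get (x i)) ∧
    ∀ z : Fin L.length, z ∉ Set.range x → ∃ C ∈ θ.dnf, ∀ q ∈ C, q ∈ L.get z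

/-- The number of occurrences of the subset `S` in the list `L`. -/
noncomputable def mcount {Q : Type} (S : Set Q) (L : List (Set Q)) : ℕ :=
  L.countP fun T => @decide (T = S) (Classical.propDecidable _)

/-- A list of subsets of `Q` realizes the `(K+1)`-bounded counting configuration `c`:
for each subset `S`, either `c S ≤ K` and exactly `c S` entries equal `S`, or
`c S = K + 1` and more than `K` entries equal `S`. -/
def Realizes {Q : Type} (K : ℕ) (c : Set Q → ℕ) (L : List (Set Q)) : Prop :=
  ∀ S : Set Q, (c S ≤ K ∧ mcount S L = c S) ∨ (c S = K + 1 ∧ K < mcount S L)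

/-! The truth of a transition formula in `struct(S₁,…,S_n)` is decided by how many of the `Sᵢ`
equal each subset: a witness tuple is determined, up to the choice of positions, by the subsets
it lands on, and this is possible iff each subset occurs at least as often in the list as in the
tuple, while the remaining positions must satisfy `ψ` exactly for those subsets that occur more
often in the list than in the tuple. All these comparisons are against numbers `≤ k ≤ K`, which
a `(K+1)`-bounded counting configuration decides. -/

open Function

theorem exists_injective_comp_eq_of_card_fiber_le {α β γ : Type*} [Finite α] [Finite β]
    {f : β → γ} {g : α → γ} (h : ∀ c, Nat.card {a // g a = c} ≤ Nat.card {b // f b = c}) :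
    ∃ x : α → β, Injective x ∧ f ∘ x = g := by
  have e : ∀ c, {a // g a = c} ↪ {b // f b = c} := fun c => by
    have := Fintype.ofFinite {a // g a = c}
    have := Fintype.ofFinite {b // f b = c}
    refine (Embedding.nonempty_of_card_le ?_).some
    simpa only [Nat.card_eq_fintype_card] using h c
  let x : α ↪ β := ((Equiv.sigmaFiberEquiv g).symm.toEmbedding.trans
    (Embedding.sigmaMap (Embedding.refl γ) e)).trans (Equiv.sigmaFiberEquiv f).toEmbedding
  exact ⟨x, x.injective, funext fun a => (e (g a) ⟨a, rfl⟩).2⟩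

section Fibers

variable {α β γ : Type*} {x : α → β} {f : β → γ} {g : α → γ}

theorem card_fiber_le_of_injective [Finite β] (hx : Injective x) (hfg : f ∘ x = g) (c : γ) :
    Nat.card {a // g a = c} ≤ Nat.card {b // f b = c} :=
  Nat.card_le_card_of_injective (fun a => ⟨x a, (congrFun hfg a).trans a.2⟩)
    fun _ _ h => Subtype.ext (hx (congrArg Subtype.val h))

theorem card_fiber_lt_iff_of_injective [Finite α] [Finite β] (hx : Injective x)
    (hfg : f ∘ x = g) (c : γ) :
    Nat.card {a // g a = c} < Nat.card {b // f b = c} ↔ ∃ b, f b = c ∧ b ∉ Set.range x := by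
  let y : {a // g a = c} → {b // f b = c} := fun a => ⟨x a, (congrFun hfg a).trans a.2⟩
  have hy : Injective y := fun _ _ h => Subtype.ext (hx (congrArg Subtype.val h))
  constructor
  · intro hlt
    by_contra! hrange
    have hsurj : Surjective y := fun ⟨b, hb⟩ => by
      obtain ⟨a, rfl⟩ := hrange b hb
      exact ⟨⟨a, (congrFun hfg a).symm.trans hb⟩, rfl⟩
    exact (Nat.card_le_card_of_surjective y hsurj).not_gt hlt
  · rintro ⟨b, hb, hbx⟩
    refine lt_of_not_ge fun hle => hbx ?_
    obtain ⟨a, ha⟩ := (hy.bijective_of_nat_card_le hle).2 ⟨b, hb⟩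
    exact ⟨a, congrArg Subtype.val ha⟩

end Fibers

theorem mcount_eq_card {Q : Type} (S : Set Q) (L : List (Set Q)) :
    mcount S L = Nat.card {j : Fin L.length // L.get j = S} := by
  classical
  rw [Nat.card_eq_fintype_card, Fintype.card_subtype, mcount]
  conv_lhs => rw [← List.map_get_finRange L]
  rw [List.countP_map, Finset.card, Finset.filter_val, Fin.univ_def]
  simp only [Multiset.filter_coe, Multiset.coe_card, List.countP_eq_length_filter]
  congr 1

section Realizes

variable {Q : Type} {K : ℕ} {c : Set Q → ℕ} {L L' : List (Set Q)}

theorem Realizes.lt_mcount_iff (hL : Realizes K c L) (hL' : Realizes K c L') (S : Set Q)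
    {m : ℕ} (hm : m ≤ K) : m < mcount S L ↔ m < mcount S L' := by
  rcases hL S with h | h <;> rcases hL' S with h' | h' <;> omega

theorem Realizes.le_mcount_iff (hL : Realizes K c L) (hL' : Realizes K c L') (S : Set Q)
    {m : ℕ} (hm : m ≤ K + 1) : m ≤ mcount S L ↔ m ≤ mcount S L' := by
  rcases hL S with h | h <;> rcases hL' S with h' | h' <;> omega

end Realizes

namespace TransFormula

variable {Q : Type}

def SatisfiesDNF (θ : TransFormula Q) (S : Set Q) : Prop :=
  ∃ C ∈ θ.dnf, ∀ q ∈ C, q ∈ S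

theorem satL_iff_exists_labelling (θ : TransFormula Q) (L : List (Set Q)) :
    θ.satL L ↔ ∃ g : Fin θ.k → Set Q, (∀ i, θ.req i ∈ g i) ∧
      ∀ S, Nat.card {i // g i = S} ≤ mcount S L ∧
        (Nat.card {i // g i = S} < mcount S L → θ.SatisfiesDNF S) := by
  simp only [mcount_eq_card]
  constructor
  · rintro ⟨x, hx, hreq, hrest⟩
    refine ⟨L.get ∘ x, hreq, fun S => ⟨card_fiber_le_of_injective hx rfl S, fun hlt => ?_⟩⟩
    obtain ⟨z, rfl, hz⟩ := (card_fiber_lt_iff_of_injective hx rfl S).1 hlt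
    exact hrest z hz
  · rintro ⟨g, hreq, hcount⟩
    obtain ⟨x, hx, hxg⟩ := exists_injective_comp_eq_of_card_fiber_le fun S => (hcount S).1
    refine ⟨x, hx, fun i => by simpa [← hxg] using hreq i, fun z hz => ?_⟩
    exact (hcount _).2 ((card_fiber_lt_iff_of_injective hx hxg _).2 ⟨z, rfl, hz⟩)

end TransFormula

theorem transition_formulas_depend_only_on_counting_configuration
    {Q : Type} (Δ : Set (TransFormula Q)) (K : ℕ) (hK : ∀ θ ∈ Δ, θ.k ≤ K)
    (L L' : List (Set Q)) (c : Set Q → ℕ)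
    (hL : Realizes K c L) (hL' : Realizes K c L') :
    ∀ θ ∈ Δ, (θ.satL L ↔ θ.satL L') := by
  intro θ hθ
  rw [θ.satL_iff_exists_labelling, θ.satL_iff_exists_labelling]
  refine exists_congr fun g => and_congr_right fun _ => forall_congr' fun S => ?_
  have hfiber : Nat.card {i // g i = S} ≤ K :=
    (Finite.card_subtype_le _).trans (by simpa using hK θ hθ)
  exact and_congr (hL.le_mcount_iff hL' S (by omega))
    (imp_congr_left (hL.lt_mcount_iff hL' S hfiber))
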